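/- arXiv:0711.0086 — 9 statements merged into one kernel-verified Lean document; each statement's English description precedes it below -/
import Mathlib

section
/- Let G and S be real n×n matrices. The maximum of sqrt(Σ_{i,j} x_{ij}²) over the set of n×n real matrices X satisfying G·X ≥ X·S entrywise, x_{ij} ≥ 0 for all i,j, Σ_i x_{ij} ≤ 1 for all j, and Σ_j x_{ij} ≤ 1 for all i, equals sqrt(n) if and only if there exists a permutation matrix X with G·X ≥ X·S entrywise. (The feasible set is nonempty, since the zero matrix is feasible, and compact, so the maximum is attained.) -/
open Matrix BigOperators

/-- A permutation matrix: a square 0-1 matrix with exactly one 1 in each row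
and each column. -/
def IsPermMatrix {n : ℕ} (X : Matrix (Fin n) (Fin n) ℝ) : Prop :=
  (∀ i j, X i j = 0 ∨ X i j = 1) ∧ (∀ i, ∃! j, X i j = 1) ∧ (∀ j, ∃! i, X i j = 1)

lemma aux_exists_unique_one {n : ℕ} (f : Fin n → ℝ) (h01 : ∀ j, f j = 0 ∨ f j = 1)
    (hs : ∑ j, f j = 1) : ∃! j, f j = 1 := by
  have h0 : ∀ j, 0 ≤ f j := fun j => by rcases h01 j with h|h <;> simp [h]
  obtain ⟨j, hj⟩ : ∃ j, f j ≠ 0 := by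
    by_contra h; push_neg at h
    rw [Finset.sum_eq_zero fun j _ => h j] at hs; norm_num at hs
  have hj1 : f j = 1 := (h01 j).resolve_left hj
  refine ⟨j, hj1, fun k hk => ?_⟩
  by_contra hne
  have hmem : j ∈ Finset.univ.erase k := Finset.mem_erase.2 ⟨Ne.symm hne, Finset.mem_univ j⟩
  have h1 : f j ≤ ∑ x ∈ Finset.univ.erase k, f x :=
    Finset.single_le_sum (fun x _ => h0 x) hmem
  have h2 : f k + ∑ x ∈ Finset.univ.erase k, f x = ∑ x, f x :=
    Finset.add_sum_erase Finset.univ f (Finset.mem_univ k)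
  rw [hs, hk, hj1] at *
  linarith [h1, h2]

lemma aux_sum_one {n : ℕ} (f : Fin n → ℝ) (h01 : ∀ j, f j = 0 ∨ f j = 1)
    (h : ∃! j, f j = 1) : ∑ j, f j = 1 := by
  obtain ⟨j₀, hj₀, hu⟩ := h
  have key : ∀ j, f j = if j = j₀ then 1 else 0 := by
    intro j; split
    · next h => rw [h]; exact hj₀
    · next h =>
        rcases h01 j with h'|h'
        · exact h'
        · exact absurd (hu j h') h
  rw [Finset.sum_congr rfl fun j _ => key j]
  simp

lemma aux_sum_sq_le {n : ℕ} (X : Matrix (Fin n) (Fin n) ℝ)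
    (h0 : ∀ i j, 0 ≤ X i j) (hc : ∀ j, ∑ i, X i j ≤ 1) (hr : ∀ i, ∑ j, X i j ≤ 1) :
    ∑ i, ∑ j, (X i j) ^ 2 ≤ (n : ℝ) := by
  have hle1 : ∀ i j, X i j ≤ 1 := by
    intro i j
    calc X i j ≤ ∑ i', X i' j :=
          Finset.single_le_sum (fun i' _ => h0 i' j) (Finset.mem_univ i)
      _ ≤ 1 := hc j
  calc ∑ i, ∑ j, (X i j) ^ 2 ≤ ∑ i, ∑ j, X i j := by
        refine Finset.sum_le_sum fun i _ => Finset.sum_le_sum fun j _ => ?_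
        nlinarith [h0 i j, hle1 i j]
    _ ≤ ∑ _i : Fin n, (1 : ℝ) := Finset.sum_le_sum fun i _ => hr i
    _ = n := by simp

theorem stmt_1 {n : ℕ} (G S : Matrix (Fin n) (Fin n) ℝ) :
    IsGreatest
      { y : ℝ | ∃ X : Matrix (Fin n) (Fin n) ℝ,
          (∀ i j, (X * S) i j ≤ (G * X) i j) ∧
          (∀ i j, 0 ≤ X i j) ∧
          (∀ j, ∑ i, X i j ≤ 1) ∧
          (∀ i, ∑ j, X i j ≤ 1) ∧
          y = Real.sqrt (∑ i, ∑ j, (X i j) ^ 2) }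
      (Real.sqrt n)
    ↔ ∃ X : Matrix (Fin n) (Fin n) ℝ,
        IsPermMatrix X ∧ ∀ i j, (X * S) i j ≤ (G * X) i j := by
  constructor
  · rintro ⟨⟨X, hGS, h0, hc, hr, hy⟩, -⟩
    -- sum of squares equals n
    have hnn : (0:ℝ) ≤ ∑ i, ∑ j, (X i j) ^ 2 :=
      Finset.sum_nonneg fun i _ => Finset.sum_nonneg fun j _ => sq_nonneg _
    have hsq : ∑ i, ∑ j, (X i j) ^ 2 = (n : ℝ) := by
      have := congrArg (fun t => t ^ 2) hy
      simpa [Real.sq_sqrt hnn, Real.sq_sqrt (Nat.cast_nonneg n : (0:ℝ) ≤ n)] using this.symm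
    have hle1 : ∀ i j, X i j ≤ 1 := by
      intro i j
      calc X i j ≤ ∑ i', X i' j :=
            Finset.single_le_sum (fun i' _ => h0 i' j) (Finset.mem_univ i)
        _ ≤ 1 := hc j
    -- total sum equals n and entries satisfy x² = x
    have hXsum_le : ∑ i, ∑ j, X i j ≤ (n : ℝ) := by
      calc ∑ i, ∑ j, X i j ≤ ∑ _i : Fin n, (1:ℝ) := Finset.sum_le_sum fun i _ => hr i
        _ = n := by simp
    have hsq_le : ∑ i, ∑ j, (X i j) ^ 2 ≤ ∑ i, ∑ j, X i j :=
      Finset.sum_le_sum fun i _ => Finset.sum_le_sum fun j _ => by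
        nlinarith [h0 i j, hle1 i j]
    have hXsum : ∑ i, ∑ j, X i j = (n : ℝ) := le_antisymm hXsum_le (hsq ▸ hsq_le)
    have hdiff : ∑ i, ∑ j, (X i j - (X i j) ^ 2) = 0 := by
      simp [Finset.sum_sub_distrib, hXsum, hsq]
    have hentry : ∀ i j, (X i j) ^ 2 = X i j := by
      have h1 := (Finset.sum_eq_zero_iff_of_nonneg
        (fun i _ => Finset.sum_nonneg fun j _ => by nlinarith [h0 i j, hle1 i j])).1 hdiff
      intro i j
      have h2 := (Finset.sum_eq_zero_iff_of_nonneg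
        (fun j _ => by nlinarith [h0 i j, hle1 i j])).1 (h1 i (Finset.mem_univ i)) j
        (Finset.mem_univ j)
      linarith
    have h01 : ∀ i j, X i j = 0 ∨ X i j = 1 := by
      intro i j
      have h := hentry i j
      have hz : X i j * (X i j - 1) = 0 := by nlinarith
      rcases mul_eq_zero.1 hz with h'|h'
      · left; exact h'
      · right; linarith
    -- row sums equal 1
    have hrow1 : ∀ i, ∑ j, X i j = 1 := by
      have hz : ∑ i : Fin n, (1 - ∑ j, X i j) = 0 := by
        simp [Finset.sum_sub_distrib, hXsum]
      intro i
      have := (Finset.sum_eq_zero_iff_of_nonneg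
        (fun i _ => by linarith [hr i])).1 hz i (Finset.mem_univ i)
      linarith
    -- column sums equal 1
    have hcol1 : ∀ j, ∑ i, X i j = 1 := by
      have hXsum' : ∑ j, ∑ i, X i j = (n : ℝ) := by
        rw [Finset.sum_comm]; exact hXsum
      have hz : ∑ j : Fin n, (1 - ∑ i, X i j) = 0 := by
        simp [Finset.sum_sub_distrib, hXsum']
      intro j
      have := (Finset.sum_eq_zero_iff_of_nonneg
        (fun j _ => by linarith [hc j])).1 hz j (Finset.mem_univ j)
      linarith
    exact ⟨X, ⟨h01, fun i => aux_exists_unique_one _ (h01 i) (hrow1 i),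
      fun j => aux_exists_unique_one _ (fun i => h01 i j) (hcol1 j)⟩, hGS⟩
  · rintro ⟨X, ⟨h01, hrow, hcol⟩, hGS⟩
    have h0 : ∀ i j, 0 ≤ X i j := fun i j => by rcases h01 i j with h|h <;> simp [h]
    have hrow1 : ∀ i, ∑ j, X i j = 1 := fun i => aux_sum_one _ (h01 i) (hrow i)
    have hcol1 : ∀ j, ∑ i, X i j = 1 := fun j => aux_sum_one _ (fun i => h01 i j) (hcol j)
    have hsq : ∑ i, ∑ j, (X i j) ^ 2 = (n : ℝ) := by
      have : ∀ i j, (X i j) ^ 2 = X i j := fun i j => by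
        rcases h01 i j with h|h <;> simp [h]
      calc ∑ i, ∑ j, (X i j) ^ 2 = ∑ i, ∑ j, X i j := by
            exact Finset.sum_congr rfl fun i _ => Finset.sum_congr rfl fun j _ => this i j
        _ = ∑ _i : Fin n, (1:ℝ) := Finset.sum_congr rfl fun i _ => hrow1 i
        _ = n := by simp
    constructor
    · exact ⟨X, hGS, h0, fun j => le_of_eq (hcol1 j), fun i => le_of_eq (hrow1 i),
        by rw [hsq]⟩
    · rintro y ⟨Y, hGS', h0', hc', hr', hy⟩
      rw [hy]
      exact Real.sqrt_le_sqrt (aux_sum_sq_le Y h0' hc' hr')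
end

section
/- Let G and S be real n×n matrices. There exists a permutation matrix X with G·X ≥ X·S entrywise if and only if the following system has a solution X in n×n real matrices: Σ_{i,j} x_{ij}² = n, G·X ≥ X·S entrywise, x_{ij} ≥ 0 for all i,j, Σ_i x_{ij} ≤ 1 for all j, and Σ_j x_{ij} ≤ 1 for all i. -/
open Matrix BigOperators

private lemma sum_one_exu {n : ℕ} (f : Fin n → ℝ) (h01 : ∀ j, f j = 0 ∨ f j = 1)
    (hsum : ∑ j, f j = 1) : ∃! j, f j = 1 := by
  have hex : ∃ j, f j = 1 := by
    by_contra h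
    push_neg at h
    have : ∀ j ∈ Finset.univ, f j = 0 := fun j _ => (h01 j).resolve_right (h j)
    rw [Finset.sum_eq_zero this] at hsum
    norm_num at hsum
  obtain ⟨a, ha⟩ := hex
  refine ⟨a, ha, fun b hb => ?_⟩
  by_contra hab
  have hsub : ({b, a} : Finset (Fin n)) ⊆ Finset.univ := Finset.subset_univ _
  have h2 : ∑ j ∈ ({b, a} : Finset (Fin n)), f j = 2 := by
    rw [Finset.sum_pair hab, ha, hb]; norm_num
  have hle : ∑ j ∈ ({b, a} : Finset (Fin n)), f j ≤ ∑ j, f j := by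
    apply Finset.sum_le_sum_of_subset_of_nonneg hsub
    intro j _ _
    rcases h01 j with h | h <;> rw [h] <;> norm_num
  rw [h2, hsum] at hle
  norm_num at hle

private lemma exu_sum_one {n : ℕ} (f : Fin n → ℝ) (h01 : ∀ j, f j = 0 ∨ f j = 1)
    (hexu : ∃! j, f j = 1) : ∑ j, f j = 1 := by
  obtain ⟨a, ha, hu⟩ := hexu
  rw [Finset.sum_eq_single_of_mem a (Finset.mem_univ a)]
  · exact ha
  · intro b _ hb
    rcases h01 b with h | h
    · exact h
    · exact absurd (hu b h) hb

theorem stmt_2 {n : ℕ} (G S : Matrix (Fin n) (Fin n) ℝ) :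
    (∃ X : Matrix (Fin n) (Fin n) ℝ,
        IsPermMatrix X ∧ ∀ i j, (X * S) i j ≤ (G * X) i j)
    ↔ ∃ X : Matrix (Fin n) (Fin n) ℝ,
        (∑ i, ∑ j, (X i j) ^ 2 = n) ∧
        (∀ i j, (X * S) i j ≤ (G * X) i j) ∧
        (∀ i j, 0 ≤ X i j) ∧
        (∀ j, ∑ i, X i j ≤ 1) ∧
        (∀ i, ∑ j, X i j ≤ 1) := by
  constructor
  · rintro ⟨X, ⟨h01, hrow, hcol⟩, hineq⟩
    refine ⟨X, ?_, hineq, ?_, ?_, ?_⟩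
    · have : ∀ i, ∑ j, (X i j) ^ 2 = 1 := by
        intro i
        have := exu_sum_one (fun j => X i j) (h01 i) (hrow i)
        calc ∑ j, (X i j) ^ 2 = ∑ j, X i j := by
              apply Finset.sum_congr rfl
              intro j _
              rcases h01 i j with h | h <;> rw [h] <;> norm_num
          _ = 1 := this
      simp [this]
    · intro i j; rcases h01 i j with h | h <;> rw [h] <;> norm_num
    · intro j
      rw [exu_sum_one (fun i => X i j) (fun i => h01 i j) (hcol j)]
    · intro i
      rw [exu_sum_one (fun j => X i j) (h01 i) (hrow i)]
  · rintro ⟨X, hsq, hineq, hpos, hcolsum, hrowsum⟩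
    -- each entry ≤ 1
    have hle1 : ∀ i j, X i j ≤ 1 := by
      intro i j
      calc X i j ≤ ∑ j', X i j' :=
            Finset.single_le_sum (fun j' _ => hpos i j') (Finset.mem_univ j)
        _ ≤ 1 := hrowsum i
    have hsqle : ∀ i j, (X i j) ^ 2 ≤ X i j := by
      intro i j
      nlinarith [hpos i j, hle1 i j]
    -- sum of entries
    have hsum_le : ∑ i, ∑ j, X i j ≤ n := by
      calc ∑ i, ∑ j, X i j ≤ ∑ _i : Fin n, (1 : ℝ) :=
            Finset.sum_le_sum (fun i _ => hrowsum i)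
        _ = n := by simp
    have hsq_le_sum : ∑ i, ∑ j, (X i j) ^ 2 ≤ ∑ i, ∑ j, X i j :=
      Finset.sum_le_sum fun i _ => Finset.sum_le_sum fun j _ => hsqle i j
    have hsum_eq : ∑ i, ∑ j, X i j = n := le_antisymm hsum_le (hsq ▸ hsq_le_sum)
    -- pointwise x^2 = x
    have hsq_eq : ∀ i j, (X i j) ^ 2 = X i j := by
      have h0 : ∑ i, ∑ j, (X i j - (X i j) ^ 2) = 0 := by
        simp only [Finset.sum_sub_distrib]
        rw [hsum_eq, hsq]; ring
      have h1 := (Finset.sum_eq_zero_iff_of_nonneg (fun i _ =>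
        Finset.sum_nonneg fun j _ => sub_nonneg.mpr (hsqle i j))).mp h0
      intro i j
      have h2 := (Finset.sum_eq_zero_iff_of_nonneg (fun j _ =>
        sub_nonneg.mpr (hsqle i j))).mp (h1 i (Finset.mem_univ i)) j (Finset.mem_univ j)
      linarith
    have h01 : ∀ i j, X i j = 0 ∨ X i j = 1 := by
      intro i j
      have := hsq_eq i j
      have : X i j * (X i j - 1) = 0 := by ring_nf; nlinarith [hsq_eq i j]
      rcases mul_eq_zero.mp this with h | h
      · exact Or.inl h
      · exact Or.inr (by linarith)
    -- row sums = 1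
    have hrow1 : ∀ i, ∑ j, X i j = 1 := by
      by_contra h
      push_neg at h
      obtain ⟨i0, hi0⟩ := h
      have hlt : ∑ j, X i0 j < 1 := lt_of_le_of_ne (hrowsum i0) hi0
      have : ∑ i, ∑ j, X i j < ∑ _i : Fin n, (1 : ℝ) := by
        apply Finset.sum_lt_sum (fun i _ => hrowsum i) ⟨i0, Finset.mem_univ i0, hlt⟩
      rw [hsum_eq] at this
      simp at this
    -- column sums = 1
    have hcol1 : ∀ j, ∑ i, X i j = 1 := by
      by_contra h
      push_neg at h
      obtain ⟨j0, hj0⟩ := h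
      have hlt : ∑ i, X i j0 < 1 := lt_of_le_of_ne (hcolsum j0) hj0
      have : ∑ j, ∑ i, X i j < ∑ _j : Fin n, (1 : ℝ) := by
        apply Finset.sum_lt_sum (fun j _ => hcolsum j) ⟨j0, Finset.mem_univ j0, hlt⟩
      rw [Finset.sum_comm, hsum_eq] at this
      simp at this
    refine ⟨X, ⟨h01, fun i => sum_one_exu _ (h01 i) (hrow1 i),
      fun j => sum_one_exu _ (fun i => h01 i j) (hcol1 j)⟩, hineq⟩
end

section
/- Let G and S be n×n real 0-1 matrices, and let X be an n×n doubly stochastic matrix such that X·S·Xᵀ ≤ G entrywise. Then there exists a permutation matrix P such that P·S·Pᵀ ≤ G entrywise. -/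
open Matrix BigOperators

/-- A doubly stochastic matrix: nonnegative entries, all row sums and column
sums equal to 1. -/
def IsDoublyStochastic {n : ℕ} (X : Matrix (Fin n) (Fin n) ℝ) : Prop :=
  (∀ i j, 0 ≤ X i j) ∧ (∀ i, ∑ j, X i j = 1) ∧ (∀ j, ∑ i, X i j = 1)

section DoublyStochastic

variable {R n : Type*} [Field R] [LinearOrder R] [IsStrictOrderedRing R]
  [Fintype n] [DecidableEq n]

theorem exists_perm_forall_pos_of_mem_doublyStochastic {M : Matrix n n R}
    (hM : M ∈ doublyStochastic R n) : ∃ σ : Equiv.Perm n, ∀ i, 0 < M i (σ i) := by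
  obtain ⟨w, hw_nonneg, hw_sum, hw_eq⟩ := exists_eq_sum_perm_of_mem_doublyStochastic hM
  obtain ⟨σ, -, hσ⟩ := Finset.exists_lt_of_sum_lt (s := Finset.univ) (f := fun _ => (0 : R))
    (g := w) (by simp only [Finset.sum_const_zero, hw_sum, zero_lt_one])
  refine ⟨σ, fun i => hσ.trans_le ?_⟩
  have hterm (τ : Equiv.Perm n) : 0 ≤ w τ * τ.permMatrix R i (σ i) :=
    mul_nonneg (hw_nonneg τ) (by simp only [PEquiv.toMatrix_apply]; split_ifs <;> simp)
  calc w σ = w σ * σ.permMatrix R i (σ i) := by simp [Equiv.toPEquiv_apply]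
    _ ≤ ∑ τ, w τ * τ.permMatrix R i (σ i) :=
      Finset.single_le_sum (fun τ _ => hterm τ) (Finset.mem_univ σ)
    _ = M i (σ i) := by
      simp only [← hw_eq, Matrix.sum_apply, Matrix.smul_apply, smul_eq_mul]

end DoublyStochastic

section Nonneg

variable {R l m n o : Type*} [Semiring R] [PartialOrder R] [IsOrderedRing R]
  [Fintype m] [Fintype n]

theorem single_le_mul_apply {A : Matrix l m R} {B : Matrix m o R}
    (hA : ∀ i k, 0 ≤ A i k) (hB : ∀ k j, 0 ≤ B k j) (i : l) (k : m) (j : o) :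
    A i k * B k j ≤ (A * B) i j :=
  Finset.single_le_sum (f := fun k => A i k * B k j)
    (fun k _ => mul_nonneg (hA i k) (hB k j)) (Finset.mem_univ k)

theorem single_le_mul_mul_apply {A : Matrix l m R} {B : Matrix m n R} {C : Matrix n o R}
    (hA : ∀ i k, 0 ≤ A i k) (hB : ∀ k k', 0 ≤ B k k') (hC : ∀ k' j, 0 ≤ C k' j)
    (i : l) (k : m) (k' : n) (j : o) :
    A i k * B k k' * C k' j ≤ (A * B * C) i j :=
  calc A i k * B k k' * C k' j ≤ (A * B) i k' * C k' j :=
        mul_le_mul_of_nonneg_right (single_le_mul_apply hA hB i k k') (hC k' j)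
    _ ≤ (A * B * C) i j :=
        single_le_mul_apply (fun i k' => Finset.sum_nonneg fun k _ =>
          mul_nonneg (hA i k) (hB k k')) hC i k' j

end Nonneg

theorem permMatrix_mul_mul_transpose_apply {R n : Type*} [Semiring R] [Fintype n]
    [DecidableEq n] (σ : Equiv.Perm n) (S : Matrix n n R) (i j : n) :
    (σ.permMatrix R * S * (σ.permMatrix R)ᵀ) i j = S (σ i) (σ j) := by
  simp [PEquiv.toMatrix_toPEquiv_mul, PEquiv.mul_toMatrix_toPEquiv, Equiv.Perm.inv_def]

theorem isPermMatrix_permMatrix {n : ℕ} (σ : Equiv.Perm (Fin n)) :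
    IsPermMatrix (σ.permMatrix ℝ) := by
  simp only [IsPermMatrix, PEquiv.toMatrix_apply, Equiv.toPEquiv_apply, Option.mem_def,
    Option.some.injEq]
  exact ⟨fun i j => by split_ifs <;> simp,
    fun i => ⟨σ i, by simp, fun j hj => (by simpa using hj : σ i = j).symm⟩,
    fun j => ⟨σ.symm j, by simp, fun i hi => (Equiv.eq_symm_apply σ).2 (by simpa using hi)⟩⟩

theorem stmt_5 {n : ℕ} (G S X : Matrix (Fin n) (Fin n) ℝ)
    (hG : ∀ i j, G i j = 0 ∨ G i j = 1)
    (hS : ∀ i j, S i j = 0 ∨ S i j = 1)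
    (hX : IsDoublyStochastic X)
    (h : ∀ i j, (X * S * Xᵀ) i j ≤ G i j) :
    ∃ P : Matrix (Fin n) (Fin n) ℝ,
      IsPermMatrix P ∧ ∀ i j, (P * S * Pᵀ) i j ≤ G i j := by
  obtain ⟨σ, hσ⟩ := exists_perm_forall_pos_of_mem_doublyStochastic
    (mem_doublyStochastic_iff_sum.2 hX)
  refine ⟨σ.permMatrix ℝ, isPermMatrix_permMatrix σ, fun i j => ?_⟩
  rw [permMatrix_mul_mul_transpose_apply]
  have hS_nonneg (k l) : 0 ≤ S k l := by rcases hS k l with hs | hs <;> simp [hs]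
  have key : X i (σ i) * S (σ i) (σ j) * X j (σ j) ≤ G i j :=
    (single_le_mul_mul_apply hX.1 hS_nonneg (fun k l => hX.1 l k) i (σ i) (σ j) j).trans (h i j)
  rcases hS (σ i) (σ j) with hs | hs <;> rw [hs]
  · rcases hG i j with hg | hg <;> simp [hg]
  · rcases hG i j with hg | hg
    · rw [hs, mul_one, hg] at key
      exact absurd key (mul_pos (hσ i) (hσ j)).not_ge
    · rw [hg]
end

section
/- Let l ≤ k with l ≥ 1, let O_G and I_G be n×k column-incidence matrices, let O_S and I_S be n×l column-incidence matrices, and let P_{lk} be the l×k truncation matrix. Suppose λ is a function from Sym(n)×Sym(k) to {0,1} such that Σ_{(σ,π)} λ(σ,π)·P_σ·O_G·P_π·P_{lk}ᵀ = O_S and Σ_{(σ,π)} λ(σ,π)·P_σ·I_G·P_π·P_{lk}ᵀ = I_S. Then there is exactly one pair (σ₁,π₁) with λ(σ₁,π₁) = 1, and λ vanishes on all other pairs. -/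
open Matrix BigOperators

/-- A column-incidence matrix: a 0-1 matrix with exactly one 1 in each column. -/
def IsColIncidence {n k : ℕ} (M : Matrix (Fin n) (Fin k) ℝ) : Prop :=
  (∀ i j, M i j = 0 ∨ M i j = 1) ∧ (∀ j, ∃! i, M i j = 1)

/-- The permutation matrix of a permutation `σ`. -/
def permMat {n : ℕ} (σ : Equiv.Perm (Fin n)) : Matrix (Fin n) (Fin n) ℝ :=
  Matrix.of fun i j => if σ j = i then 1 else 0

/-- The `l × k` truncation matrix `(I_l 0)`. -/
def trunc (l k : ℕ) : Matrix (Fin l) (Fin k) ℝ :=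
  Matrix.of fun i j => if (i : ℕ) = (j : ℕ) then 1 else 0

lemma colsum_eq_one {n k : ℕ} {M : Matrix (Fin n) (Fin k) ℝ}
    (hM : IsColIncidence M) (j : Fin k) : ∑ i, M i j = 1 := by
  obtain ⟨i0, hi0, huniq⟩ := hM.2 j
  rw [Finset.sum_eq_single i0]
  · exact hi0
  · intro i _ hne
    rcases hM.1 i j with h | h
    · exact h
    · exact absurd (huniq i h) hne
  · intro h; exact absurd (Finset.mem_univ i0) h

lemma entry_eq {n k l : ℕ} (hlk : l ≤ k) (σ : Equiv.Perm (Fin n))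
    (π : Equiv.Perm (Fin k)) (M : Matrix (Fin n) (Fin k) ℝ) (i : Fin n) (j : Fin l) :
    (permMat σ * M * permMat π * (trunc l k)ᵀ) i j
      = M (σ⁻¹ i) (π (Fin.castLE hlk j)) := by
  simp only [Matrix.mul_apply, Matrix.transpose_apply, permMat, trunc, Matrix.of_apply]
  rw [Finset.sum_eq_single (Fin.castLE hlk j)]
  · rw [if_pos (by simp : (j:ℕ) = (Fin.castLE hlk j : ℕ)), mul_one]
    rw [Finset.sum_eq_single (π (Fin.castLE hlk j))]
    · rw [if_pos rfl, mul_one]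
      rw [Finset.sum_eq_single (σ⁻¹ i)]
      · simp
      · intro a _ hne
        rw [if_neg, zero_mul]
        intro h; exact hne (by simp [← h])
      · simp
    · intro b _ hne
      rw [if_neg (fun h => hne h.symm), mul_zero]
    · simp
  · intro d _ hne
    rw [if_neg, mul_zero]
    intro h
    exact hne (Fin.ext h.symm)
  · simp

lemma colsum_summand {n k l : ℕ} (hlk : l ≤ k) (σ : Equiv.Perm (Fin n))
    (π : Equiv.Perm (Fin k)) {M : Matrix (Fin n) (Fin k) ℝ}
    (hM : IsColIncidence M) (j : Fin l) :
    ∑ i, (permMat σ * M * permMat π * (trunc l k)ᵀ) i j = 1 := by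
  have : ∀ i, (permMat σ * M * permMat π * (trunc l k)ᵀ) i j
      = M (σ⁻¹ i) (π (Fin.castLE hlk j)) := fun i => entry_eq hlk σ π M i j
  rw [Finset.sum_congr rfl (fun i _ => this i)]
  rw [Equiv.sum_comp σ⁻¹ (fun a => M a (π (Fin.castLE hlk j)))]
  exact colsum_eq_one hM _

theorem stmt_10 {n k l : ℕ} (hlk : l ≤ k) (hl : 1 ≤ l)
    (OG IG : Matrix (Fin n) (Fin k) ℝ) (OS IS : Matrix (Fin n) (Fin l) ℝ)
    (hOG : IsColIncidence OG) (hIG : IsColIncidence IG)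
    (hOS : IsColIncidence OS) (hIS : IsColIncidence IS)
    (lam : Equiv.Perm (Fin n) × Equiv.Perm (Fin k) → ℝ)
    (hlam : ∀ p, lam p = 0 ∨ lam p = 1)
    (hO : ∑ p : Equiv.Perm (Fin n) × Equiv.Perm (Fin k),
        lam p • (permMat p.1 * OG * permMat p.2 * (trunc l k)ᵀ) = OS)
    (hI : ∑ p : Equiv.Perm (Fin n) × Equiv.Perm (Fin k),
        lam p • (permMat p.1 * IG * permMat p.2 * (trunc l k)ᵀ) = IS) :
    ∃ p₁ : Equiv.Perm (Fin n) × Equiv.Perm (Fin k),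
      lam p₁ = 1 ∧ ∀ p ≠ p₁, lam p = 0 := by
  set j0 : Fin l := ⟨0, hl⟩
  -- total weight equals 1
  have hsum : ∑ p : Equiv.Perm (Fin n) × Equiv.Perm (Fin k), lam p = 1 := by
    have h1 : ∑ i, (∑ p : Equiv.Perm (Fin n) × Equiv.Perm (Fin k),
        lam p • (permMat p.1 * OG * permMat p.2 * (trunc l k)ᵀ)) i j0
        = ∑ i, OS i j0 := by rw [hO]
    rw [colsum_eq_one hOS j0] at h1
    rw [← h1]
    simp only [Matrix.sum_apply, Matrix.smul_apply, smul_eq_mul]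
    rw [Finset.sum_comm]
    apply Finset.sum_congr rfl
    intro p _
    rw [← Finset.mul_sum, colsum_summand hlk p.1 p.2 hOG j0, mul_one]
  -- counting: filter of ones has card 1
  set t := Finset.univ.filter (fun p => lam p = 1) with ht
  have hcard : (t.card : ℝ) = 1 := by
    rw [← hsum]
    rw [← Finset.sum_filter_add_sum_filter_not Finset.univ (fun p => lam p = 1) lam]
    rw [Finset.sum_congr rfl (fun p hp => (Finset.mem_filter.mp hp).2)]
    have : ∑ p ∈ Finset.univ.filter (fun p => ¬ lam p = 1), lam p = 0 := by
      apply Finset.sum_eq_zero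
      intro p hp
      rcases hlam p with h | h
      · exact h
      · exact absurd h (Finset.mem_filter.mp hp).2
    rw [this, add_zero]
    simp [ht]
  have hcard' : t.card = 1 := by exact_mod_cast hcard
  obtain ⟨p₁, hp₁⟩ := Finset.card_eq_one.mp hcard'
  refine ⟨p₁, ?_, ?_⟩
  · have : p₁ ∈ t := hp₁ ▸ Finset.mem_singleton_self p₁
    exact (Finset.mem_filter.mp this).2
  · intro p hne
    rcases hlam p with h | h
    · exact h
    · have : p ∈ t := Finset.mem_filter.mpr ⟨Finset.mem_univ p, h⟩
      rw [hp₁, Finset.mem_singleton] at this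
      exact absurd this hne
end

section
/- Let l ≤ k with l ≥ 1, let O_G and I_G be n×k column-incidence matrices, let O_S and I_S be n×l column-incidence matrices, and let P_{lk} be the l×k truncation matrix. Then there exists λ : Sym(n)×Sym(k) → {0,1} with Σ_{(σ,π)} λ(σ,π)·P_σ·O_G·P_π·P_{lk}ᵀ = O_S and Σ_{(σ,π)} λ(σ,π)·P_σ·I_G·P_π·P_{lk}ᵀ = I_S if and only if there exists λ : Sym(n)×Sym(k) → ℝ with λ ≥ 0 and Σ_{(σ,π)} λ(σ,π) = 1 satisfying the same two matrix equalities. -/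
open Matrix BigOperators

/-!
Each matrix `P_σ G P_π P_{lk}ᵀ` is `G` with its rows permuted and a subset of its columns
selected, hence again a column-incidence matrix. A 0-1 solution therefore has `∑ λ = 1`, by
comparing the sums of one column. Conversely, if a convex combination of matrices with entries in
`[0, 1]` is a 0-1 matrix, then, as `0` and `1` are extreme points of `[0, 1]`, every summand of
positive weight equals it; so any single pair `(σ, π)` in the support of a convex solution is a
0-1 solution.
-/

open Finset

lemma trunc_apply {l k : ℕ} (hlk : l ≤ k) (i : Fin l) (j : Fin k) :
    trunc l k i j = if Fin.castLE hlk i = j then 1 else 0 := by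
  simp [trunc, Fin.ext_iff]

lemma permMat_mul_mul_permMat_mul_trunc_transpose {n k l : ℕ} (hlk : l ≤ k)
    (σ : Equiv.Perm (Fin n)) (A : Matrix (Fin n) (Fin k) ℝ) (π : Equiv.Perm (Fin k)) :
    permMat σ * A * permMat π * (trunc l k)ᵀ = A.submatrix σ.symm (π ∘ Fin.castLE hlk) := by
  ext i j
  simp [Matrix.mul_apply, permMat, trunc_apply hlk, ← Equiv.eq_symm_apply,
    eq_comm (a := Fin.castLE hlk j)]

lemma IsColIncidence.submatrix {m n k l : ℕ} {A : Matrix (Fin n) (Fin k) ℝ}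
    (hA : IsColIncidence A) (e : Fin m ≃ Fin n) (c : Fin l → Fin k) :
    IsColIncidence (A.submatrix e c) :=
  ⟨fun i j => hA.1 (e i) (c j), fun j => e.existsUnique_congr_right.2 (hA.2 (c j))⟩

lemma IsColIncidence.permMat_mul_mul_permMat_mul_trunc_transpose {n k l : ℕ}
    {A : Matrix (Fin n) (Fin k) ℝ} (hA : IsColIncidence A) (hlk : l ≤ k)
    (σ : Equiv.Perm (Fin n)) (π : Equiv.Perm (Fin k)) :
    IsColIncidence (permMat σ * A * permMat π * (trunc l k)ᵀ) := by
  rw [_root_.permMat_mul_mul_permMat_mul_trunc_transpose hlk]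
  exact hA.submatrix _ _

lemma IsColIncidence.sum_apply_col {n k : ℕ} {A : Matrix (Fin n) (Fin k) ℝ}
    (hA : IsColIncidence A) (j : Fin k) : ∑ i, A i j = 1 := by
  obtain ⟨i₀, hi₀, hu⟩ := hA.2 j
  rw [sum_eq_single i₀ (fun i _ hi => (hA.1 i j).resolve_right (hi ∘ hu i)) (by simp)]
  exact hi₀

lemma IsColIncidence.apply_mem_Icc {n k : ℕ} {A : Matrix (Fin n) (Fin k) ℝ}
    (hA : IsColIncidence A) (i : Fin n) (j : Fin k) : A i j ∈ Set.Icc 0 1 := by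
  rcases hA.1 i j with h | h <;> simp [h]

lemma sum_eq_one_of_sum_smul_eq {ι m n : Type*} [Fintype ι] [Fintype m]
    {w : ι → ℝ} {M : ι → Matrix m n ℝ} {S : Matrix m n ℝ} {j : n}
    (hM : ∀ p, ∑ i, M p i j = 1) (hS : ∑ i, S i j = 1) (h : ∑ p, w p • M p = S) :
    ∑ p, w p = 1 := by
  calc ∑ p, w p = ∑ p, w p * ∑ i, M p i j := by simp [hM]
    _ = ∑ i, S i j := by
      rw [← h]; simp [Matrix.sum_apply, mul_sum, sum_comm (γ := ι)]
    _ = 1 := hS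

lemma eq_of_sum_mul_eq_of_mem_Icc {ι : Type*} [Fintype ι] {w m : ι → ℝ} {t : ℝ}
    (hw : ∀ p, 0 ≤ w p) (hw1 : ∑ p, w p = 1) (hm : ∀ p, m p ∈ Set.Icc 0 1)
    (ht : t = 0 ∨ t = 1) (h : ∑ p, w p * m p = t) {p₀ : ι} (hp₀ : 0 < w p₀) :
    m p₀ = t := by
  rcases ht with rfl | rfl
  · have := (sum_eq_zero_iff_of_nonneg fun p _ => mul_nonneg (hw p) (hm p).1).1 h p₀ (mem_univ _)
    exact (mul_eq_zero.1 this).resolve_left hp₀.ne'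
  · have h' : ∑ p, w p * (1 - m p) = 0 := by simp [mul_sub, sum_sub_distrib, h, hw1]
    have := (sum_eq_zero_iff_of_nonneg fun p _ =>
      mul_nonneg (hw p) (sub_nonneg.2 (hm p).2)).1 h' p₀ (mem_univ _)
    linarith [(mul_eq_zero.1 this).resolve_left hp₀.ne']

lemma eq_of_sum_smul_eq_of_mem_Icc {ι m n : Type*} [Fintype ι]
    {w : ι → ℝ} {M : ι → Matrix m n ℝ} {S : Matrix m n ℝ}
    (hw : ∀ p, 0 ≤ w p) (hw1 : ∑ p, w p = 1) (hM : ∀ p i j, M p i j ∈ Set.Icc 0 1)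
    (hS : ∀ i j, S i j = 0 ∨ S i j = 1) (h : ∑ p, w p • M p = S) {p₀ : ι}
    (hp₀ : 0 < w p₀) : M p₀ = S := by
  ext i j
  refine eq_of_sum_mul_eq_of_mem_Icc hw hw1 (fun p => hM p i j) (hS i j) ?_ hp₀
  simp [← h, Matrix.sum_apply]

theorem stmt_11 {n k l : ℕ} (hlk : l ≤ k) (hl : 1 ≤ l)
    (OG IG : Matrix (Fin n) (Fin k) ℝ) (OS IS : Matrix (Fin n) (Fin l) ℝ)
    (hOG : IsColIncidence OG) (hIG : IsColIncidence IG)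
    (hOS : IsColIncidence OS) (hIS : IsColIncidence IS) :
    (∃ lam : Equiv.Perm (Fin n) × Equiv.Perm (Fin k) → ℝ,
        (∀ p, lam p = 0 ∨ lam p = 1) ∧
        (∑ p : Equiv.Perm (Fin n) × Equiv.Perm (Fin k),
            lam p • (permMat p.1 * OG * permMat p.2 * (trunc l k)ᵀ) = OS) ∧
        (∑ p : Equiv.Perm (Fin n) × Equiv.Perm (Fin k),
            lam p • (permMat p.1 * IG * permMat p.2 * (trunc l k)ᵀ) = IS))
    ↔ (∃ lam : Equiv.Perm (Fin n) × Equiv.Perm (Fin k) → ℝ,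
        (∀ p, 0 ≤ lam p) ∧
        (∑ p : Equiv.Perm (Fin n) × Equiv.Perm (Fin k), lam p = 1) ∧
        (∑ p : Equiv.Perm (Fin n) × Equiv.Perm (Fin k),
            lam p • (permMat p.1 * OG * permMat p.2 * (trunc l k)ᵀ) = OS) ∧
        (∑ p : Equiv.Perm (Fin n) × Equiv.Perm (Fin k),
            lam p • (permMat p.1 * IG * permMat p.2 * (trunc l k)ᵀ) = IS)) := by
  have hinc {A : Matrix (Fin n) (Fin k) ℝ} (hA : IsColIncidence A)
      (p : Equiv.Perm (Fin n) × Equiv.Perm (Fin k)) :=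
    hA.permMat_mul_mul_permMat_mul_trunc_transpose hlk p.1 p.2
  constructor
  · rintro ⟨lam, h01, hO, hI⟩
    refine ⟨lam, fun p => (h01 p).elim (fun h => h.ge) (fun h => h ▸ zero_le_one), ?_, hO, hI⟩
    exact sum_eq_one_of_sum_smul_eq (j := ⟨0, hl⟩) (fun p => (hinc hOG p).sum_apply_col _)
      (hOS.sum_apply_col _) hO
  · rintro ⟨lam, hnn, hsum, hO, hI⟩
    obtain ⟨p₀, -, hp₀⟩ := exists_ne_zero_of_sum_ne_zero (hsum ▸ one_ne_zero)
    have hsupp {A : Matrix (Fin n) (Fin k) ℝ} {S : Matrix (Fin n) (Fin l) ℝ}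
        (hA : IsColIncidence A) (hS : IsColIncidence S)
        (h : ∑ p, lam p • (permMat p.1 * A * permMat p.2 * (trunc l k)ᵀ) = S) :
        ∑ p, (if p = p₀ then (1 : ℝ) else 0) •
          (permMat p.1 * A * permMat p.2 * (trunc l k)ᵀ) = S := by
      simpa [ite_smul] using eq_of_sum_smul_eq_of_mem_Icc hnn hsum
        (fun p => (hinc hA p).apply_mem_Icc) hS.1 h ((hnn p₀).lt_of_ne' hp₀)
    exact ⟨_, fun p => by by_cases h : p = p₀ <;> simp [h],
      hsupp hOG hOS hO, hsupp hIG hIS hI⟩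
end

section
/- Let l ≤ k, let O_G and I_G be n×k column-incidence matrices (viewed as real matrices), let O_S and I_S be n×l column-incidence matrices, and let P_{lk} be the l×k truncation matrix. Then there exist an n×n real matrix X and a k×k real matrix Z satisfying the constraints O_G·Z·P_{lk}ᵀ = Xᵀ·O_S, I_G·Z·P_{lk}ᵀ = Xᵀ·I_S, X doubly stochastic, Z doubly stochastic, and Σ_{i,j} x_{ij}² + Σ_{i,j} z_{ij}² = n + k, if and only if there exist an n×n permutation matrix X and a k×k permutation matrix Z with O_G·Z·P_{lk}ᵀ = Xᵀ·O_S and I_G·Z·P_{lk}ᵀ = Xᵀ·I_S. -/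
open Matrix BigOperators

lemma perm_row_sum {n : ℕ} (X : Matrix (Fin n) (Fin n) ℝ)
    (h01 : ∀ i j, X i j = 0 ∨ X i j = 1) (hrow : ∀ i, ∃! j, X i j = 1) (i : Fin n) :
    ∑ j, X i j = 1 := by
  obtain ⟨j0, hj0, huniq⟩ := hrow i
  rw [Finset.sum_eq_single j0]
  · exact hj0
  · intro b _ hb
    rcases h01 i b with h | h
    · exact h
    · exact absurd (huniq b h) hb
  · intro h; exact absurd (Finset.mem_univ j0) h

lemma perm_ds {n : ℕ} (X : Matrix (Fin n) (Fin n) ℝ) (hX : IsPermMatrix X) :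
    IsDoublyStochastic X := by
  obtain ⟨h01, hrow, hcol⟩ := hX
  refine ⟨fun i j => ?_, fun i => perm_row_sum X h01 hrow i, fun j => ?_⟩
  · rcases h01 i j with h | h <;> simp [h]
  · exact perm_row_sum Xᵀ (fun i j => h01 j i) hcol j

lemma perm_sq_sum {n : ℕ} (X : Matrix (Fin n) (Fin n) ℝ) (hX : IsPermMatrix X) :
    (∑ i, ∑ j, (X i j) ^ 2) = (n : ℝ) := by
  have : ∀ i j, (X i j) ^ 2 = X i j := by
    intro i j; rcases hX.1 i j with h | h <;> simp [h]
  simp only [this]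
  rw [Finset.sum_congr rfl (fun i _ => perm_row_sum X hX.1 hX.2.1 i)]
  simp

lemma ds_entry_le_one {n : ℕ} (X : Matrix (Fin n) (Fin n) ℝ)
    (hX : IsDoublyStochastic X) (i j : Fin n) : X i j ≤ 1 := by
  have := Finset.single_le_sum (f := fun j' => X i j')
    (fun j' _ => hX.1 i j') (Finset.mem_univ j)
  rw [hX.2.1 i] at this; exact this

lemma ds_sq_sum_le {n : ℕ} (X : Matrix (Fin n) (Fin n) ℝ)
    (hX : IsDoublyStochastic X) : (∑ i, ∑ j, (X i j) ^ 2) ≤ (n : ℝ) := by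
  have h : ∀ i j, (X i j) ^ 2 ≤ X i j := by
    intro i j
    have h0 := hX.1 i j
    have h1 := ds_entry_le_one X hX i j
    nlinarith
  calc (∑ i, ∑ j, (X i j) ^ 2) ≤ ∑ i, ∑ j, X i j :=
        Finset.sum_le_sum fun i _ => Finset.sum_le_sum fun j _ => h i j
    _ = (n : ℝ) := by
        rw [Finset.sum_congr rfl (fun i _ => hX.2.1 i)]; simp

lemma ds_sq_sum_eq_perm {n : ℕ} (X : Matrix (Fin n) (Fin n) ℝ)
    (hX : IsDoublyStochastic X) (hsum : (∑ i, ∑ j, (X i j) ^ 2) = (n : ℝ)) :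
    IsPermMatrix X := by
  have h01 : ∀ i j, X i j = 0 ∨ X i j = 1 := by
    have hzero : ∑ i, ∑ j, (X i j - (X i j) ^ 2) = 0 := by
      have : ∑ i, ∑ j, X i j = (n : ℝ) := by
        rw [Finset.sum_congr rfl (fun i _ => hX.2.1 i)]; simp
      simp only [Finset.sum_sub_distrib]
      rw [this, hsum]; ring
    have hnn : ∀ i ∈ (Finset.univ : Finset (Fin n)),
        0 ≤ ∑ j, (X i j - (X i j) ^ 2) := by
      intro i _
      refine Finset.sum_nonneg fun j _ => ?_
      have h0 := hX.1 i j
      have h1 := ds_entry_le_one X hX i j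
      nlinarith
    intro i j
    have hrow0 := (Finset.sum_eq_zero_iff_of_nonneg hnn).mp hzero i (Finset.mem_univ i)
    have hnn2 : ∀ j' ∈ (Finset.univ : Finset (Fin n)), 0 ≤ X i j' - (X i j') ^ 2 := by
      intro j' _
      have h0 := hX.1 i j'
      have h1 := ds_entry_le_one X hX i j'
      nlinarith
    have hterm := (Finset.sum_eq_zero_iff_of_nonneg hnn2).mp hrow0 j (Finset.mem_univ j)
    have : X i j * (1 - X i j) = 0 := by nlinarith
    rcases mul_eq_zero.mp this with h | h
    · exact Or.inl h
    · exact Or.inr (by linarith)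
  have key : ∀ (Y : Matrix (Fin n) (Fin n) ℝ), (∀ i j, Y i j = 0 ∨ Y i j = 1) →
      (∀ i, ∑ j, Y i j = 1) → ∀ i, ∃! j, Y i j = 1 := by
    intro Y hY hsumY i
    have hex : ∃ j, Y i j = 1 := by
      by_contra hne
      push_neg at hne
      have : ∑ j, Y i j = 0 := Finset.sum_eq_zero fun j _ => by
        rcases hY i j with h | h
        · exact h
        · exact absurd h (hne j)
      rw [hsumY i] at this; norm_num at this
    obtain ⟨j0, hj0⟩ := hex
    refine ⟨j0, hj0, fun j1 hj1 => ?_⟩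
    by_contra hne
    have hsub : ({j1, j0} : Finset (Fin n)) ⊆ Finset.univ := Finset.subset_univ _
    have h2 : ∑ j ∈ ({j1, j0} : Finset (Fin n)), Y i j ≤ ∑ j, Y i j := by
      refine Finset.sum_le_sum_of_subset_of_nonneg hsub fun j _ _ => ?_
      rcases hY i j with h | h <;> simp [h]
    rw [Finset.sum_pair hne, hj0, hj1, hsumY i] at h2
    norm_num at h2
  refine ⟨h01, key X h01 hX.2.1, ?_⟩
  exact key Xᵀ (fun i j => h01 j i) hX.2.2

theorem stmt_13 {n k l : ℕ} (hlk : l ≤ k)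
    (OG IG : Matrix (Fin n) (Fin k) ℝ) (OS IS : Matrix (Fin n) (Fin l) ℝ)
    (hOG : IsColIncidence OG) (hIG : IsColIncidence IG)
    (hOS : IsColIncidence OS) (hIS : IsColIncidence IS) :
    (∃ (X : Matrix (Fin n) (Fin n) ℝ) (Z : Matrix (Fin k) (Fin k) ℝ),
        OG * Z * (trunc l k)ᵀ = Xᵀ * OS ∧
        IG * Z * (trunc l k)ᵀ = Xᵀ * IS ∧
        IsDoublyStochastic X ∧ IsDoublyStochastic Z ∧
        (∑ i, ∑ j, (X i j) ^ 2) + (∑ i, ∑ j, (Z i j) ^ 2) = n + k)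
    ↔ (∃ (X : Matrix (Fin n) (Fin n) ℝ) (Z : Matrix (Fin k) (Fin k) ℝ),
        IsPermMatrix X ∧ IsPermMatrix Z ∧
        OG * Z * (trunc l k)ᵀ = Xᵀ * OS ∧
        IG * Z * (trunc l k)ᵀ = Xᵀ * IS) := by
  constructor
  · rintro ⟨X, Z, h1, h2, hX, hZ, hsum⟩
    have hXn : ∑ i, ∑ j, (X i j) ^ 2 ≤ (n : ℝ) := ds_sq_sum_le X hX
    have hZk : ∑ i, ∑ j, (Z i j) ^ 2 ≤ (k : ℝ) := ds_sq_sum_le Z hZ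
    have hXeq : ∑ i, ∑ j, (X i j) ^ 2 = (n : ℝ) := by linarith
    have hZeq : ∑ i, ∑ j, (Z i j) ^ 2 = (k : ℝ) := by linarith
    exact ⟨X, Z, ds_sq_sum_eq_perm X hX hXeq, ds_sq_sum_eq_perm Z hZ hZeq, h1, h2⟩
  · rintro ⟨X, Z, hX, hZ, h1, h2⟩
    refine ⟨X, Z, h1, h2, perm_ds X hX, perm_ds Z hZ, ?_⟩
    rw [perm_sq_sum X hX, perm_sq_sum Z hZ]
end

section
/- Let l ≤ k, let O_G and I_G be n×k column-incidence matrices, let O_S and I_S be n×l column-incidence matrices, and let P_{lk} be the l×k truncation matrix. Set G = O_G·I_Gᵀ and S = O_S·I_Sᵀ, and assume S is a 0-1 matrix. Suppose X is an n×n doubly stochastic matrix and Z is a k×k doubly stochastic matrix satisfying O_G·Z·P_{lk}ᵀ = Xᵀ·O_S, I_G·Z·P_{lk}ᵀ = Xᵀ·I_S, and Z·P_{lk}ᵀ·P_{lk}·Zᵀ ≤ I_k entrywise. Then there exists an n×n permutation matrix P with Pᵀ·S·P ≤ G entrywise. -/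
open Matrix BigOperators

theorem stmt_14 {n k l : ℕ} (hlk : l ≤ k)
    (OG IG : Matrix (Fin n) (Fin k) ℝ) (OS IS : Matrix (Fin n) (Fin l) ℝ)
    (hOG : IsColIncidence OG) (hIG : IsColIncidence IG)
    (hOS : IsColIncidence OS) (hIS : IsColIncidence IS)
    (G : Matrix (Fin n) (Fin n) ℝ) (S : Matrix (Fin n) (Fin n) ℝ)
    (hG : G = OG * IGᵀ) (hSdef : S = OS * ISᵀ)
    (hS01 : ∀ i j, S i j = 0 ∨ S i j = 1)
    (X : Matrix (Fin n) (Fin n) ℝ) (Z : Matrix (Fin k) (Fin k) ℝ)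
    (hX : IsDoublyStochastic X) (hZ : IsDoublyStochastic Z)
    (hO : OG * Z * (trunc l k)ᵀ = Xᵀ * OS)
    (hI : IG * Z * (trunc l k)ᵀ = Xᵀ * IS)
    (hZZ : ∀ i j, (Z * (trunc l k)ᵀ * trunc l k * Zᵀ) i j ≤ (1 : Matrix (Fin k) (Fin k) ℝ) i j) :
    ∃ P : Matrix (Fin n) (Fin n) ℝ,
      IsPermMatrix P ∧ ∀ i j, (Pᵀ * S * P) i j ≤ G i j := by
  classical
  obtain ⟨hXnn, hXrow, hXcol⟩ := hX
  obtain ⟨hZnn, hZrow, hZcol⟩ := hZ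
  -- the embedding Fin l → Fin k
  set em : Fin l → Fin k := fun j => Fin.castLE hlk j with hem
  have htrunc : ∀ (i : Fin l) (j : Fin k), trunc l k i j = if em i = j then 1 else 0 := by
    intro i j
    simp only [trunc, Matrix.of_apply, hem]
    congr 1
    simp only [eq_iff_iff]
    constructor
    · intro h; exact Fin.ext h
    · intro h; rw [← h]; rfl
  -- computation of Z * truncᵀ
  have hZt : ∀ (c : Fin k) (i : Fin l), (Z * (trunc l k)ᵀ) c i = Z c (em i) := by
    intro c i
    rw [Matrix.mul_apply]
    rw [Finset.sum_eq_single (em i)]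
    · rw [Matrix.transpose_apply, htrunc, if_pos rfl, mul_one]
    · intro b _ hb
      rw [Matrix.transpose_apply, htrunc, if_neg (Ne.symm hb), mul_zero]
    · intro h; exact absurd (Finset.mem_univ _) h
  have htZ : ∀ (i : Fin l) (c : Fin k), (trunc l k * Zᵀ) i c = Z c (em i) := by
    intro i c
    rw [Matrix.mul_apply]
    rw [Finset.sum_eq_single (em i)]
    · rw [Matrix.transpose_apply, htrunc, if_pos rfl, one_mul]
    · intro b _ hb
      rw [htrunc, if_neg (Ne.symm hb), zero_mul]
    · intro h; exact absurd (Finset.mem_univ _) h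
  have hM : ∀ c c' : Fin k, (Z * (trunc l k)ᵀ * trunc l k * Zᵀ) c c' =
      ∑ i : Fin l, Z c (em i) * Z c' (em i) := by
    intro c c'
    have : Z * (trunc l k)ᵀ * trunc l k * Zᵀ = (Z * (trunc l k)ᵀ) * (trunc l k * Zᵀ) := by
      rw [Matrix.mul_assoc (Z * (trunc l k)ᵀ)]
    rw [this, Matrix.mul_apply]
    exact Finset.sum_congr rfl fun i _ => by rw [hZt, htZ]
  -- orthogonality of first l columns of Z
  have horth : ∀ (c c' : Fin k), c ≠ c' → ∀ i : Fin l, Z c (em i) * Z c' (em i) = 0 := by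
    intro c c' hne i
    have h1 : (∑ i : Fin l, Z c (em i) * Z c' (em i)) ≤ 0 := by
      rw [← hM]
      have := hZZ c c'
      rwa [Matrix.one_apply_ne hne] at this
    have h2 : ∀ i ∈ Finset.univ, (0:ℝ) ≤ Z c (em i) * Z c' (em i) := fun i _ =>
      mul_nonneg (hZnn _ _) (hZnn _ _)
    have h3 : (∑ i : Fin l, Z c (em i) * Z c' (em i)) = 0 :=
      le_antisymm h1 (Finset.sum_nonneg h2)
    exact (Finset.sum_eq_zero_iff_of_nonneg h2).mp h3 i (Finset.mem_univ i)
  -- the first l columns of Z are unit columns: σ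
  have hsigma : ∀ j : Fin l, ∃ c : Fin k, Z c (em j) = 1 ∧ ∀ c', c' ≠ c → Z c' (em j) = 0 := by
    intro j
    have hcs : ∑ c : Fin k, Z c (em j) = 1 := hZcol (em j)
    have hex : ∃ c, Z c (em j) ≠ 0 := by
      by_contra h
      push_neg at h
      rw [Finset.sum_eq_zero (fun c _ => h c)] at hcs
      exact one_ne_zero hcs.symm
    obtain ⟨c, hc⟩ := hex
    have hz : ∀ c', c' ≠ c → Z c' (em j) = 0 := by
      intro c' hne
      have := horth c c' (Ne.symm hne) j
      rcases mul_eq_zero.mp this with h | h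
      · exact absurd h hc
      · exact h
    refine ⟨c, ?_, hz⟩
    have hss : (∑ c' : Fin k, Z c' (em j)) = Z c (em j) := by
      rw [Finset.sum_eq_single c]
      · intro b _ hb; exact hz b hb
      · intro h; exact absurd (Finset.mem_univ _) h
    rw [← hss, hcs]
  choose σ hσ1 hσ0 using hsigma
  -- key identity from hO: rows of X at heads of S-edges
  have keyO : ∀ (j : Fin l) (b : Fin n), OS b j = 1 → ∀ a, X b a = OG a (σ j) := by
    intro j b hb a
    have h := congrFun (congrFun hO a) j
    have hlhs : (OG * Z * (trunc l k)ᵀ) a j = OG a (σ j) := by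
      have : OG * Z * (trunc l k)ᵀ = OG * (Z * (trunc l k)ᵀ) := by
        rw [Matrix.mul_assoc]
      rw [this, Matrix.mul_apply]
      rw [Finset.sum_eq_single (σ j)]
      · rw [hZt, hσ1, mul_one]
      · intro c _ hc; rw [hZt, hσ0 j c hc, mul_zero]
      · intro h; exact absurd (Finset.mem_univ _) h
    have hrhs : (Xᵀ * OS) a j = X b a := by
      rw [Matrix.mul_apply]
      rw [Finset.sum_eq_single b]
      · rw [Matrix.transpose_apply, hb, mul_one]
      · intro b' _ hb'
        have : OS b' j = 0 := by
          rcases hOS.1 b' j with h0 | h1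
          · exact h0
          · exact absurd ((hOS.2 j).unique h1 hb) hb'
        rw [this, mul_zero]
      · intro h; exact absurd (Finset.mem_univ _) h
    rw [← hrhs, ← h, hlhs]
  have keyI : ∀ (j : Fin l) (b : Fin n), IS b j = 1 → ∀ a, X b a = IG a (σ j) := by
    intro j b hb a
    have h := congrFun (congrFun hI a) j
    have hlhs : (IG * Z * (trunc l k)ᵀ) a j = IG a (σ j) := by
      have : IG * Z * (trunc l k)ᵀ = IG * (Z * (trunc l k)ᵀ) := by
        rw [Matrix.mul_assoc]
      rw [this, Matrix.mul_apply]
      rw [Finset.sum_eq_single (σ j)]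
      · rw [hZt, hσ1, mul_one]
      · intro c _ hc; rw [hZt, hσ0 j c hc, mul_zero]
      · intro h; exact absurd (Finset.mem_univ _) h
    have hrhs : (Xᵀ * IS) a j = X b a := by
      rw [Matrix.mul_apply]
      rw [Finset.sum_eq_single b]
      · rw [Matrix.transpose_apply, hb, mul_one]
      · intro b' _ hb'
        have : IS b' j = 0 := by
          rcases hIS.1 b' j with h0 | h1
          · exact h0
          · exact absurd ((hIS.2 j).unique h1 hb) hb'
        rw [this, mul_zero]
      · intro h; exact absurd (Finset.mem_univ _) h
    rw [← hrhs, ← h, hlhs]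
  -- uniqueness of 1-entries in rows/columns of X
  have huniqcol : ∀ (a : Fin n) (b b' : Fin n), X b a = 1 → X b' a = 1 → b = b' := by
    intro a b b' h1 h2
    by_contra hne
    have hsub : ({b, b'} : Finset (Fin n)) ⊆ Finset.univ := Finset.subset_univ _
    have := Finset.sum_le_sum_of_subset_of_nonneg hsub
      (fun i _ _ => hXnn i a)
    rw [Finset.sum_pair hne, h1, h2, hXcol a] at this
    linarith
  -- the partial map
  set p : Fin n → Prop := fun b => ∃ a, X b a = 1 with hp
  set g : {x // p x} → Fin n := fun b => b.2.choose with hg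
  have hgX : ∀ b : {x // p x}, X b.1 (g b) = 1 := fun b => b.2.choose_spec
  have hginj : Function.Injective g := by
    intro b b' h
    have h1 : X b.1 (g b) = 1 := hgX b
    have h2 : X b'.1 (g b) = 1 := h ▸ hgX b'
    exact Subtype.ext (huniqcol (g b) b.1 b'.1 h1 h2)
  set e : {x // p x} ≃ {x // x ∈ Set.range g} := Equiv.ofInjective g hginj with he
  set π : Equiv.Perm (Fin n) := Equiv.extendSubtype e with hπ
  have hπmem : ∀ (b : Fin n) (hb : p b), π b = g ⟨b, hb⟩ := by
    intro b hb
    rw [hπ, Equiv.extendSubtype_apply_of_mem e b hb]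
    rfl
  -- the permutation matrix
  set P : Matrix (Fin n) (Fin n) ℝ := Matrix.of fun b a => if π b = a then 1 else 0 with hP
  have hPapp : ∀ b a, P b a = if π b = a then 1 else 0 := fun _ _ => rfl
  refine ⟨P, ⟨?_, ?_, ?_⟩, ?_⟩
  · intro i j
    rw [hPapp]
    by_cases h : π i = j
    · right; rw [if_pos h]
    · left; rw [if_neg h]
  · intro i
    refine ⟨π i, ?_, ?_⟩
    · show P i (π i) = 1
      rw [hPapp, if_pos rfl]
    · intro j hj
      rw [hPapp] at hj
      by_contra hne
      rw [if_neg (fun h => hne h.symm)] at hj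
      exact zero_ne_one hj
  · intro j
    refine ⟨π.symm j, ?_, ?_⟩
    · show P (π.symm j) j = 1
      rw [hPapp, if_pos (π.apply_symm_apply j)]
    · intro i hi
      rw [hPapp] at hi
      by_cases h : π i = j
      · rw [← h, Equiv.symm_apply_apply]
      · rw [if_neg h] at hi; exact absurd hi zero_ne_one
  -- the main inequality
  · intro a a'
    have hPSP : (Pᵀ * S * P) a a' = S (π.symm a) (π.symm a') := by
      have h1 : ∀ b', (Pᵀ * S) a b' = S (π.symm a) b' := by
        intro b'
        rw [Matrix.mul_apply]
        rw [Finset.sum_eq_single (π.symm a)]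
        · rw [Matrix.transpose_apply, hPapp, if_pos (π.apply_symm_apply a), one_mul]
        · intro b _ hb
          rw [Matrix.transpose_apply, hPapp, if_neg, zero_mul]
          intro h
          exact hb (by rw [← h, Equiv.symm_apply_apply])
        · intro h; exact absurd (Finset.mem_univ _) h
      rw [Matrix.mul_apply]
      rw [Finset.sum_eq_single (π.symm a')]
      · rw [h1, hPapp, if_pos (π.apply_symm_apply a'), mul_one]
      · intro b _ hb
        rw [hPapp, if_neg, mul_zero]
        intro h
        exact hb (by rw [← h, Equiv.symm_apply_apply])
      · intro h; exact absurd (Finset.mem_univ _) h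
    rw [hPSP]
    -- suffices: ∀ b b', S b b' ≤ G (π b) (π b')
    have main : ∀ b b' : Fin n, S b b' ≤ G (π b) (π b') := by
      intro b b'
      have hGnn : ∀ x y, (0:ℝ) ≤ G x y := by
        intro x y
        rw [hG, Matrix.mul_apply]
        refine Finset.sum_nonneg fun c _ => mul_nonneg ?_ ?_
        · rcases hOG.1 x c with h | h <;> rw [h] <;> norm_num
        · rcases hIG.1 y c with h | h <;> rw [Matrix.transpose_apply, h] <;> norm_num
      rcases hS01 b b' with h0 | h1
      · rw [h0]; exact hGnn _ _
      · rw [h1]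
        -- find the S-edge j
        have hsum : (∑ j : Fin l, OS b j * IS b' j) = 1 := by
          rw [← h1, hSdef, Matrix.mul_apply]
          exact Finset.sum_congr rfl fun j _ => rfl
        have hex : ∃ j : Fin l, OS b j = 1 ∧ IS b' j = 1 := by
          by_contra hcon
          push_neg at hcon
          have : ∀ j ∈ Finset.univ, OS b j * IS b' j = (0:ℝ) := by
            intro j _
            rcases hOS.1 b j with hA | hA
            · rw [hA, zero_mul]
            · rcases hIS.1 b' j with hB | hB
              · rw [hB, mul_zero]
              · exact absurd hB (hcon j hA)
          rw [Finset.sum_eq_zero this] at hsum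
          exact one_ne_zero hsum.symm
        obtain ⟨j, hOSb, hISb'⟩ := hex
        -- b is in domain
        obtain ⟨ao, haoOG, -⟩ := hOG.2 (σ j)
        obtain ⟨ai, haiIG, -⟩ := hIG.2 (σ j)
        have hbp : p b := ⟨ao, by rw [keyO j b hOSb ao]; exact haoOG⟩
        have hb'p : p b' := ⟨ai, by rw [keyI j b' hISb' ai]; exact haiIG⟩
        have hπb : OG (π b) (σ j) = 1 := by
          rw [hπmem b hbp, ← keyO j b hOSb]
          exact hgX ⟨b, hbp⟩
        have hπb' : IG (π b') (σ j) = 1 := by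
          rw [hπmem b' hb'p, ← keyI j b' hISb']
          exact hgX ⟨b', hb'p⟩
        rw [hG, Matrix.mul_apply]
        have hle : (1:ℝ) = OG (π b) (σ j) * IGᵀ (σ j) (π b') := by
          rw [hπb, Matrix.transpose_apply, hπb', one_mul]
        rw [hle]
        refine Finset.single_le_sum (f := fun c => OG (π b) c * IGᵀ c (π b'))
          (fun c _ => mul_nonneg ?_ ?_) (Finset.mem_univ (σ j))
        · rcases hOG.1 (π b) c with h | h <;> rw [h] <;> norm_num
        · rcases hIG.1 (π b') c with h | h <;> rw [Matrix.transpose_apply, h] <;> norm_num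
    have := main (π.symm a) (π.symm a')
    rwa [π.apply_symm_apply, π.apply_symm_apply] at this
end

section
/- Let τ = {B₁, …, B_β} be a nonempty finite set of vectors in ℝ^N whose sum is zero (equivalently, whose barycenter is the origin). Then for every Φ in the linear span of τ there exists μ > 0 such that μ·Φ lies in the convex hull of τ. -/
open BigOperators

section

variable {E : Type*} [AddCommGroup E] [Module ℝ E]

theorem Finset.sum_add_const_smul_eq_of_sum_eq_zero {s : Finset E} (hs : ∑ v ∈ s, v = 0)
    (f : E → ℝ) (c : ℝ) : ∑ v ∈ s, (f v + c) • v = ∑ v ∈ s, f v • v := by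
  rw [← add_zero (∑ v ∈ s, f v • v), ← smul_zero c, ← hs, Finset.smul_sum,
    ← Finset.sum_add_distrib]
  simp only [add_smul]

/-- Since the vectors of `s` sum to zero, adding a large constant to the coefficients of a
linear combination does not change it; once the coefficients are positive, rescaling by their
total gives a center of mass. -/
theorem Finset.exists_pos_smul_mem_convexHull_of_sum_eq_zero {s : Finset E} (hne : s.Nonempty)
    (hs : ∑ v ∈ s, v = 0) {x : E} (hx : x ∈ Submodule.span ℝ (s : Set E)) :
    ∃ μ : ℝ, 0 < μ ∧ μ • x ∈ convexHull ℝ (s : Set E) := by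
  obtain ⟨f, -, rfl⟩ := Submodule.mem_span_finset.mp hx
  set a : E → ℝ := fun v => f v + (∑ w ∈ s, |f w| + 1)
  have ha : ∀ v ∈ s, 0 < a v := fun v hv => by
    have := Finset.single_le_sum (fun w _ => abs_nonneg (f w)) hv
    linarith [neg_abs_le (f v)]
  have hT : 0 < ∑ v ∈ s, a v := Finset.sum_pos ha hne
  refine ⟨(∑ v ∈ s, a v)⁻¹, inv_pos.mpr hT, ?_⟩
  have hcenter : s.centerMass a id = (∑ v ∈ s, a v)⁻¹ • ∑ v ∈ s, f v • v := by
    rw [Finset.centerMass]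
    exact congrArg _ (Finset.sum_add_const_smul_eq_of_sum_eq_zero hs f _)
  rw [← hcenter]
  exact s.centerMass_id_mem_convexHull (fun v hv => (ha v hv).le) hT

end

theorem stmt_15 {N : ℕ} (τ : Finset (Fin N → ℝ)) (hne : τ.Nonempty)
    (hsum : ∑ v ∈ τ, v = 0) :
    ∀ Φ ∈ Submodule.span ℝ (τ : Set (Fin N → ℝ)),
      ∃ μ : ℝ, 0 < μ ∧ μ • Φ ∈ convexHull ℝ (τ : Set (Fin N → ℝ)) :=
  fun _ hΦ => τ.exists_pos_smul_mem_convexHull_of_sum_eq_zero hne hsum hΦ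
end

section
/- Let X be an n×n doubly stochastic real matrix. Then there exists a permutation σ of {1, …, n} such that X_{i σ(i)} > 0 for every i; that is, one can select n nonzero entries of X lying in pairwise distinct rows and pairwise distinct columns. -/
open Matrix BigOperators

theorem stmt_18 {n : ℕ} (X : Matrix (Fin n) (Fin n) ℝ)
    (hX : IsDoublyStochastic X) :
    ∃ σ : Equiv.Perm (Fin n), ∀ i, 0 < X i (σ i) := by
  obtain ⟨h1, h2, h3⟩ := hX
  have hmem : X ∈ doublyStochastic ℝ (Fin n) := by
    rw [mem_doublyStochastic_iff_sum]
    exact ⟨fun i j => h1 i j, h2, h3⟩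
  obtain ⟨w, hw0, hw1, hw2⟩ := exists_eq_sum_perm_of_mem_doublyStochastic hmem
  have : ∃ σ, 0 < w σ := by
    by_contra h
    push_neg at h
    have : ∀ σ ∈ Finset.univ, w σ = 0 := fun σ _ => le_antisymm (h σ) (hw0 σ)
    rw [Finset.sum_eq_zero this] at hw1
    norm_num at hw1
  obtain ⟨σ, hσ⟩ := this
  refine ⟨σ, fun i => ?_⟩
  have := congrFun (congrFun hw2 i) (σ i)
  rw [← this]
  simp only [Matrix.sum_apply, Matrix.smul_apply, smul_eq_mul]
  have hterm : ∀ τ : Equiv.Perm (Fin n), τ ∈ Finset.univ →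
      0 ≤ w τ * (τ.permMatrix ℝ) i (σ i) := by
    intro τ _
    apply mul_nonneg (hw0 τ)
    simp [Equiv.Perm.permMatrix, PEquiv.toMatrix_apply]
    split <;> norm_num
  have hle : w σ * (σ.permMatrix ℝ) i (σ i) ≤
      ∑ τ : Equiv.Perm (Fin n), w τ * (τ.permMatrix ℝ) i (σ i) :=
    Finset.single_le_sum hterm (Finset.mem_univ σ)
  have : (σ.permMatrix ℝ) i (σ i) = 1 := by
    simp [Equiv.Perm.permMatrix, PEquiv.toMatrix_apply, Equiv.toPEquiv_apply]
  calc (0:ℝ) < w σ := hσ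
    _ = w σ * (σ.permMatrix ℝ) i (σ i) := by rw [this, mul_one]
    _ ≤ _ := hle
end
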